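/- arXiv:0806.0906 — 2 statements merged into one kernel-verified Lean document; each statement's English description precedes it below -/
import Mathlib

section
/- For every n ≥ 2, the star graph S_n (the tree on n vertices having one vertex adjacent to each of the other n−1 vertices, and no other edges) satisfies β(S_n) = 1. -/
/-- One commutation move: swap two consecutive letters that are non-adjacent in `G`. -/
def CommStep {V : Type*} (G : SimpleGraph V) (w w' : List V) : Prop :=
  ∃ (a b : V) (u v : List V),
    ¬ G.Adj a b ∧ w = u ++ a :: b :: v ∧ w' = u ++ b :: a :: v

/-- Commutation equivalence of words: the equivalence relation generated by commutation moves. -/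
def commSetoid {V : Type*} (G : SimpleGraph V) : Setoid (List V) :=
  ⟨Relation.EqvGen (CommStep G), Relation.EqvGen.is_equivalence _⟩

/-- `bWords G k` = number of commutation classes of injective words of length `k` on `G`. -/
noncomputable def bWords {V : Type*} (G : SimpleGraph V) (k : ℕ) : ℕ :=
  Nat.card (Quotient (Setoid.comap
    (fun w : {w : List V // w.Nodup ∧ w.length = k} => w.1) (commSetoid G)))

/-- The boolean number `β(G) = (-1)^{|V|} ∑_{k=0}^{|V|} (-1)^k b_k(G)`. -/
noncomputable def booleanNumber {V : Type*} (G : SimpleGraph V) [Fintype V] : ℤ :=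
  (-1) ^ (Fintype.card V) *
    ∑ k ∈ Finset.range (Fintype.card V + 1), (-1) ^ k * (bWords G k : ℤ)

/-- The star graph on `n` vertices: vertex `0` is adjacent to every other vertex,
and there are no other edges. -/
def starG (n : ℕ) : SimpleGraph (Fin n) where
  Adj i j := i ≠ j ∧ (i.1 = 0 ∨ j.1 = 0)
  symm := ⟨by intro i j ⟨h1, h2⟩; exact ⟨h1.symm, h2.symm⟩⟩
  loopless := ⟨by intro i h; exact h.1 rfl⟩
/-!
On a star with centre `c` two distinct leaves commute and `c` commutes with no other vertex, so
a commutation move never changes the multisets of letters between consecutive occurrences of `c`;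
conversely the letters of such a block pairwise commute, so words with the same blocks are
equivalent. An injective word of length `k + 1` is therefore classified by a `(k + 1)`-set of
leaves (if it avoids `c`) or by the two disjoint sets of leaves before and after `c`, whence
`b_{k+1} = C(m, k+1) + C(m, k) 2^k` with `m = |V| - 1`. As `b_0 = 1` and `m ≥ 1`, the terms
`C(m, ·)` cancel in the alternating sum, and what remains is `-(1 - 2)^m = (-1)^|V|`.
-/

open Relation

namespace CommStep

variable {V : Type*} {G : SimpleGraph V}

theorem append_append {w w' : List V} (h : CommStep G w w') (u v : List V) :
    CommStep G (u ++ w ++ v) (u ++ w' ++ v) := by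
  obtain ⟨a, b, u', v', hab, rfl, rfl⟩ := h
  exact ⟨a, b, u ++ u', v' ++ v, hab, by simp, by simp⟩

theorem eqvGen_append_append {w w' : List V} (h : EqvGen (CommStep G) w w') (u v : List V) :
    EqvGen (CommStep G) (u ++ w ++ v) (u ++ w' ++ v) := by
  induction h with
  | rel _ _ h => exact .rel _ _ (h.append_append u v)
  | refl => exact .refl _
  | symm _ _ _ ih => exact .symm _ _ ih
  | trans _ _ _ _ _ ih₁ ih₂ => exact .trans _ _ _ ih₁ ih₂

theorem eqvGen_append {w₁ w₂ v₁ v₂ : List V} (hw : EqvGen (CommStep G) w₁ w₂)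
    (hv : EqvGen (CommStep G) v₁ v₂) : EqvGen (CommStep G) (w₁ ++ v₁) (w₂ ++ v₂) := by
  have h₁ := eqvGen_append_append hw [] v₁
  have h₂ := eqvGen_append_append hv w₂ []
  simp only [List.nil_append, List.append_nil] at h₁ h₂
  exact h₁.trans _ _ _ h₂

theorem eqvGen_of_perm {l₁ l₂ : List V} (hp : l₁.Perm l₂)
    (hl : ∀ a ∈ l₁, ∀ b ∈ l₁, ¬ G.Adj a b) : EqvGen (CommStep G) l₁ l₂ := by
  induction hp with
  | nil => exact .refl _
  | cons x _ ih =>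
    exact eqvGen_append (w₁ := [x]) (.refl _)
      (ih fun a ha b hb => hl a (.tail _ ha) b (.tail _ hb))
  | swap x y l => exact .rel _ _ ⟨y, x, [], l, hl y (by simp) x (by simp), rfl, rfl⟩
  | trans h₁₂ _ ih₁₂ ih₂₃ =>
    exact .trans _ _ _ (ih₁₂ hl)
      (ih₂₃ fun a ha b hb => hl a (h₁₂.mem_iff.2 ha) b (h₁₂.mem_iff.2 hb))

theorem eqvGen_intercalate (sep : List V) {L L' : List (List V)} (h : L.Forall₂ List.Perm L')
    (hL : ∀ l ∈ L, ∀ a ∈ l, ∀ b ∈ l, ¬ G.Adj a b) :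
    EqvGen (CommStep G) (sep.intercalate L) (sep.intercalate L') := by
  induction h with
  | nil => exact .refl _
  | @cons l l' L L' hl hLL' ih =>
    have hblock : EqvGen (CommStep G) l l' := eqvGen_of_perm hl (hL l (by simp))
    cases hLL' with
    | nil => simpa using hblock
    | cons _ _ =>
      simp only [List.intercalate_cons_cons]
      exact eqvGen_append (eqvGen_append hblock (.refl _)) (ih fun m hm => hL m (.tail _ hm))

end CommStep

theorem bWords_zero {V : Type*} (G : SimpleGraph V) : bWords G 0 = 1 := by
  rw [bWords, Nat.card_eq_one_iff_unique]
  refine ⟨⟨fun q q' => ?_⟩, ⟨Quotient.mk _ ⟨[], List.nodup_nil, rfl⟩⟩⟩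
  induction q using Quotient.inductionOn with | h w => ?_
  induction q' using Quotient.inductionOn with | h w' => ?_
  congr 1
  exact Subtype.ext
    ((List.length_eq_zero_iff.1 w.2.2).trans (List.length_eq_zero_iff.1 w'.2.2).symm)

def SimpleGraph.IsStar {V : Type*} (G : SimpleGraph V) (c : V) : Prop :=
  ∀ a b, G.Adj a b ↔ a ≠ b ∧ (a = c ∨ b = c)

theorem SimpleGraph.IsStar.not_adj_iff {V : Type*} {G : SimpleGraph V} {c : V}
    (hG : G.IsStar c) {a b : V} : ¬ G.Adj a b ↔ a = b ∨ (a ≠ c ∧ b ≠ c) := by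
  rw [hG]; tauto

theorem starG_isStar (n : ℕ) [NeZero n] : (starG n).IsStar 0 := by
  intro a b
  change a ≠ b ∧ (a.1 = 0 ∨ b.1 = 0) ↔ _
  rw [Fin.val_eq_zero_iff, Fin.val_eq_zero_iff]

theorem List.notMem_of_mem_splitOn {V : Type*} [DecidableEq V] {c : V} {w l : List V}
    (hl : l ∈ w.splitOn c) : c ∉ l := by
  induction w generalizing l with
  | nil => simp_all
  | cons x w ih =>
    rw [List.splitOn_cons_eq_if_modifyHead] at hl
    split_ifs at hl with hx
    · rcases List.mem_cons.1 hl with rfl | hl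
      · simp
      · exact ih hl
    · cases h : w.splitOn c with
      | nil => simp at h
      | cons l₀ ls =>
        rw [h] at hl
        rcases List.mem_cons.1 hl with rfl | hl
        · simpa [Ne.symm (by simpa using hx)] using ih (h ▸ List.mem_cons_self)
        · exact ih (h ▸ List.mem_cons_of_mem _ hl)

section Blocks

variable {V : Type*} [DecidableEq V] (c : V)

def blocks (w : List V) : List (Multiset V) :=
  (w.splitOn c).map (↑)

theorem blocks_cons (x : V) (w : List V) :
    blocks c (x :: w) =
      if x = c then 0 :: blocks c w else (blocks c w).modifyHead (x ::ₘ ·) := by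
  simp only [blocks, List.splitOn_cons_eq_if_modifyHead, beq_iff_eq]
  split_ifs with hx
  · simp
  · cases w.splitOn c <;> simp

theorem blocks_append_congr {w w' : List V} (h : blocks c w = blocks c w') (u : List V) :
    blocks c (u ++ w) = blocks c (u ++ w') := by
  induction u with
  | nil => exact h
  | cons x u ih => simp only [List.cons_append, blocks_cons, ih]

theorem blocks_swap {a b : V} (ha : a ≠ c) (hb : b ≠ c) (v : List V) :
    blocks c (a :: b :: v) = blocks c (b :: a :: v) := by
  cases h : blocks c v with
  | nil => simp [blocks] at h
  | cons m ms => simp [blocks_cons, ha, hb, h, Multiset.cons_swap]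

theorem blocks_of_notMem {w : List V} (hw : c ∉ w) : blocks c w = [↑w] := by
  simp [blocks, List.splitOn_eq_singleton hw]

theorem blocks_append_cons_self {p s : List V} (hp : c ∉ p) (hs : c ∉ s) :
    blocks c (p ++ c :: s) = [↑p, ↑s] := by
  simp [blocks, List.splitOn_append_cons_self_of_not_mem hp, List.splitOn_eq_singleton hs]

end Blocks

namespace SimpleGraph.IsStar

variable {V : Type*} [DecidableEq V] {G : SimpleGraph V} {c : V}

theorem blocks_eq_of_commStep (hG : G.IsStar c) {w w' : List V} (h : CommStep G w w') :
    blocks c w = blocks c w' := by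
  obtain ⟨a, b, u, v, hab, rfl, rfl⟩ := h
  rcases hG.not_adj_iff.1 hab with rfl | ⟨ha, hb⟩
  · rfl
  · exact blocks_append_congr c (blocks_swap c ha hb v) u

theorem blocks_eq_of_eqvGen (hG : G.IsStar c) {w w' : List V}
    (h : EqvGen (CommStep G) w w') : blocks c w = blocks c w' := by
  induction h with
  | rel _ _ h => exact hG.blocks_eq_of_commStep h
  | refl => rfl
  | symm _ _ _ ih => exact ih.symm
  | trans _ _ _ _ _ ih₁ ih₂ => exact ih₁.trans ih₂

theorem eqvGen_of_blocks_eq (hG : G.IsStar c) {w w' : List V} (h : blocks c w = blocks c w') :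
    EqvGen (CommStep G) w w' := by
  have hperm : (w.splitOn c).Forall₂ List.Perm (w'.splitOn c) := by
    have := List.forall₂_eq_eq_eq ▸ h
    simpa only [blocks, List.forall₂_map_left_iff, List.forall₂_map_right_iff,
      Multiset.coe_eq_coe] using this
  have hcommute : ∀ l ∈ w.splitOn c, ∀ a ∈ l, ∀ b ∈ l, ¬ G.Adj a b := fun l hl a ha b hb =>
    have hcl := List.notMem_of_mem_splitOn hl
    hG.not_adj_iff.2 (.inr ⟨ne_of_mem_of_not_mem ha hcl, ne_of_mem_of_not_mem hb hcl⟩)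
  -- `simp` closes the gap with `[c].intercalate (w.splitOn c) = w`
  simpa using CommStep.eqvGen_intercalate [c] hperm hcommute

end SimpleGraph.IsStar

open Finset in
theorem Finset.card_disjoint_pairs {α : Type*} [DecidableEq α] (S : Finset α) (j : ℕ) :
    #{p ∈ S.powerset ×ˢ S.powerset | Disjoint p.1 p.2 ∧ #p.1 + #p.2 = j} =
      (#S).choose j * 2 ^ j := by
  have hsigma : #((S.powersetCard j).sigma fun C => C.powerset) = (#S).choose j * 2 ^ j := by
    rw [card_sigma, sum_congr rfl fun C hC => by rw [card_powerset, (mem_powersetCard.1 hC).2],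
      sum_const, card_powersetCard, smul_eq_mul]
  rw [← hsigma]
  refine card_bij' (fun p _ => ⟨p.1 ∪ p.2, p.1⟩) (fun x _ => (x.2, x.1 \ x.2)) ?_ ?_ ?_ ?_
  · intro p hp
    simp only [mem_filter, mem_product, mem_powerset] at hp
    simp only [mem_sigma, mem_powersetCard, mem_powerset, subset_union_left, and_true]
    exact ⟨union_subset hp.1.1 hp.1.2, by rw [card_union_of_disjoint hp.2.1, hp.2.2]⟩
  · intro x hx
    simp only [mem_sigma, mem_powersetCard, mem_powerset] at hx
    simp only [mem_filter, mem_product, mem_powerset]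
    refine ⟨⟨hx.2.trans hx.1.1, sdiff_subset.trans hx.1.1⟩, disjoint_sdiff, ?_⟩
    rw [card_sdiff_of_subset hx.2, ← hx.1.2]
    have := card_le_card hx.2
    omega
  · intro p hp
    simp only [mem_filter] at hp
    simp [union_sdiff_cancel_left hp.2.1]
  · intro x hx
    simp only [mem_sigma, mem_powerset] at hx
    simp [union_sdiff_of_subset hx.2]

abbrev WordClasses {V : Type*} (G : SimpleGraph V) (k : ℕ) : Type _ :=
  Quotient (Setoid.comap (fun w : {w : List V // w.Nodup ∧ w.length = k} => w.1) (commSetoid G))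

/-- Normal forms of the commutation classes of injective words of length `k + 1` on a star with
centre `c`: the set of letters of a word avoiding `c` (`inl`), or the sets of letters before and
after `c` (`inr`). -/
def StarWordData {V : Type*} (c : V) (k : ℕ) : Type _ :=
  {s : Finset V // c ∉ s ∧ s.card = k + 1} ⊕
    {p : Finset V × Finset V // c ∉ p.1 ∧ c ∉ p.2 ∧ Disjoint p.1 p.2 ∧ p.1.card + p.2.card = k}

namespace StarWordData

variable {V : Type*} {c : V} {k : ℕ}

noncomputable def word : StarWordData c k → List V
  | .inl s => s.1.toList
  | .inr p => p.1.1.toList ++ c :: p.1.2.toList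

theorem word_nodup : (t : StarWordData c k) → t.word.Nodup
  | .inl s => s.1.nodup_toList
  | .inr ⟨(A, B), hA, hB, hAB, _⟩ => by
    rw [word, List.nodup_middle, List.nodup_cons, List.nodup_append]
    refine ⟨by simp [hA, hB], A.nodup_toList, B.nodup_toList, ?_⟩
    simp only [Finset.mem_toList]
    rintro a ha _ hb rfl
    exact Finset.disjoint_left.1 hAB ha hb

theorem word_length : (t : StarWordData c k) → t.word.length = k + 1
  | .inl s => by simp [word, s.2.2]
  | .inr ⟨(A, B), _, _, _, h⟩ => by simp [word, ← h]; omega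

noncomputable def toWordClasses (G : SimpleGraph V) (t : StarWordData c k) :
    WordClasses G (k + 1) :=
  Quotient.mk _ ⟨t.word, t.word_nodup, t.word_length⟩

variable [DecidableEq V]

@[simp]
theorem blocks_word_inl (s : {s : Finset V // c ∉ s ∧ s.card = k + 1}) :
    blocks c (word (.inl s : StarWordData c k)) = [s.1.val] := by
  simp [word, blocks_of_notMem c (mt Finset.mem_toList.1 s.2.1)]

@[simp]
theorem blocks_word_inr (p : {p : Finset V × Finset V //
      c ∉ p.1 ∧ c ∉ p.2 ∧ Disjoint p.1 p.2 ∧ p.1.card + p.2.card = k}) :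
    blocks c (word (.inr p : StarWordData c k)) = [p.1.1.val, p.1.2.val] := by
  simp [word, blocks_append_cons_self c (mt Finset.mem_toList.1 p.2.1)
    (mt Finset.mem_toList.1 p.2.2.1)]

theorem blocks_word_injective :
    Function.Injective (fun t : StarWordData c k => blocks c t.word) := by
  rintro (⟨s, _⟩ | ⟨⟨A, B⟩, _⟩) (⟨s', _⟩ | ⟨⟨A', B'⟩, _⟩) h <;>
    simp only [blocks_word_inl, blocks_word_inr, List.cons.injEq, Finset.val_inj,
      reduceCtorEq, and_false, and_true] at h
  · subst h; rfl
  · obtain ⟨rfl, rfl⟩ := h; rfl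

theorem exists_blocks_word_eq {w : List V} (hw : w.Nodup) (hlen : w.length = k + 1) :
    ∃ t : StarWordData c k, blocks c t.word = blocks c w := by
  by_cases hc : c ∈ w
  · obtain ⟨p, s, rfl⟩ := List.append_of_mem hc
    obtain ⟨hcps, hps'⟩ := List.nodup_cons.1 (List.nodup_middle.1 hw)
    obtain ⟨hp, hs, hps⟩ := List.nodup_append.1 hps'
    simp only [List.mem_append, not_or] at hcps
    refine ⟨.inr ⟨(⟨p, hp⟩, ⟨s, hs⟩), hcps.1, hcps.2, ?_, ?_⟩, ?_⟩
    · exact Finset.disjoint_left.2 fun a ha hb => hps a ha a hb rfl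
    · simp only [List.length_append, List.length_cons] at hlen
      exact (by omega : p.length + s.length = k)
    · simp [blocks_append_cons_self c hcps.1 hcps.2]
  · exact ⟨.inl ⟨⟨w, hw⟩, hc, hlen⟩, by simp [blocks_of_notMem c hc]⟩

open Finset in
theorem card_eq [Fintype V] (c : V) (k : ℕ) :
    Nat.card (StarWordData c k) =
      (Fintype.card V - 1).choose (k + 1) + (Fintype.card V - 1).choose k * 2 ^ k := by
  have hleaves : #(univ.erase c) = Fintype.card V - 1 := by
    rw [card_erase_of_mem (mem_univ c), card_univ]
  rw [StarWordData, Nat.card_sum, Nat.card_eq_fintype_card, Nat.card_eq_fintype_card,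
    Fintype.card_of_subtype ((univ.erase c).powersetCard (k + 1)) (by simp [subset_erase]),
    Fintype.card_of_subtype {p ∈ (univ.erase c).powerset ×ˢ (univ.erase c).powerset |
      Disjoint p.1 p.2 ∧ #p.1 + #p.2 = k} (by simp [subset_erase, and_assoc]),
    card_powersetCard, card_disjoint_pairs, hleaves]

end StarWordData

theorem SimpleGraph.IsStar.bijective_toWordClasses {V : Type*} [DecidableEq V]
    {G : SimpleGraph V} {c : V} (hG : G.IsStar c) {k : ℕ} :
    Function.Bijective (StarWordData.toWordClasses (c := c) (k := k) G) := by
  refine ⟨fun t t' h => StarWordData.blocks_word_injective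
    (hG.blocks_eq_of_eqvGen (Quotient.exact h)), fun q => ?_⟩
  induction q using Quotient.inductionOn with | h w => ?_
  obtain ⟨t, ht⟩ := StarWordData.exists_blocks_word_eq (c := c) w.2.1 w.2.2
  exact ⟨t, Quotient.sound (hG.eqvGen_of_blocks_eq ht)⟩

theorem SimpleGraph.IsStar.bWords_succ {V : Type*} [DecidableEq V] [Fintype V]
    {G : SimpleGraph V} {c : V} (hG : G.IsStar c) (k : ℕ) :
    bWords G (k + 1) =
      (Fintype.card V - 1).choose (k + 1) + (Fintype.card V - 1).choose k * 2 ^ k :=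
  (Nat.card_congr (Equiv.ofBijective _ hG.bijective_toWordClasses)).symm.trans
    (StarWordData.card_eq c k)

open Finset in
theorem alternating_sum_choose_succ_add_choose_mul_two_pow {m : ℕ} (hm : m ≠ 0) :
    ∑ k ∈ range (m + 1), (-1 : ℤ) ^ (k + 1) * ↑(m.choose (k + 1) + m.choose k * 2 ^ k) + 1 =
      (-1) ^ (m + 1) := by
  have hchoose : ∑ k ∈ range (m + 1), (-1 : ℤ) ^ (k + 1) * m.choose (k + 1) = -1 := by
    have hshift := sum_range_succ' (fun k => (-1 : ℤ) ^ k * m.choose k) (m + 1)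
    rw [sum_range_succ, Int.alternating_sum_range_choose, if_neg hm,
      Nat.choose_succ_self] at hshift
    simp only [Nat.cast_zero, mul_zero, add_zero, pow_zero, Nat.choose_zero_right,
      Nat.cast_one, mul_one] at hshift
    linarith
  have hbinom : ∑ k ∈ range (m + 1), (-1 : ℤ) ^ (k + 1) * (m.choose k * 2 ^ k) = -(-1) ^ m := by
    have h := add_pow (-2 : ℤ) 1 m
    rw [show (-2 : ℤ) + 1 = -1 by norm_num] at h
    rw [h, ← sum_neg_distrib]
    refine sum_congr rfl fun k _ => ?_
    rw [one_pow, mul_one, show (-2 : ℤ) = -1 * 2 by norm_num, mul_pow, pow_succ]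
    ring
  push_cast
  simp only [mul_add, sum_add_distrib, hchoose, hbinom]
  ring

theorem SimpleGraph.IsStar.booleanNumber_eq_one {V : Type*} [DecidableEq V] [Fintype V]
    {G : SimpleGraph V} {c : V} (hG : G.IsStar c) (hV : 2 ≤ Fintype.card V) :
    booleanNumber G = 1 := by
  obtain ⟨m, hm, hVm⟩ : ∃ m, m ≠ 0 ∧ Fintype.card V = m + 1 :=
    ⟨Fintype.card V - 1, by omega, by omega⟩
  rw [booleanNumber, hVm, Finset.sum_range_succ', bWords_zero]
  simp only [hG.bWords_succ, hVm, Nat.add_sub_cancel]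
  rw [pow_zero, Nat.cast_one, mul_one, alternating_sum_choose_succ_add_choose_mul_two_pow hm,
    ← pow_add, Even.neg_one_pow ⟨_, rfl⟩]

/-- **Boolean number of a star.**  For every `n ≥ 2`, the star graph `S_n` satisfies
`β(S_n) = 1`. -/
theorem booleanNumber_starGraph (n : ℕ) (hn : 2 ≤ n) :
    booleanNumber (starG n) = 1 := by
  have : NeZero n := ⟨by omega⟩
  exact (starG_isStar n).booleanNumber_eq_one (by simpa using hn)
end

section
/- Let T be a nonempty finite tree with edge set E. Then β(T) equals the number of subsets B ⊆ E such that every vertex of T is incident to some edge in B (equivalently, the number of spanning forests of T). -/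
/-!
Commutation classes of injective words on `G` are determined by the set `S` of letters and the
orientation of the induced subgraph `G[S]` read off the word: this orientation is invariant under
commutations, and two words with the same letters and orientation are related by commuting the
first letter of one to the front of the other. On a forest every orientation of `G[S]` is read off
some word (list `S` by a potential that increases by one along each oriented edge), so
`b_k(G) = ∑_{|S| = k} 2^{e(S)}`. Expanding `2^{e(S)}` as a sum over edge sets `B ⊆ E(S)` and
exchanging the sums, the alternating sum over the sets `S` containing every endpoint of `B`
vanishes unless `B` covers all vertices.
-/

open Finset List

lemma sum_superset_neg_one_pow_card {α : Type*} [Fintype α] [DecidableEq α] (U : Finset α) :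
    ∑ S ∈ univ.powerset with U ⊆ S, (-1 : ℤ) ^ #S =
      if U = univ then (-1) ^ Fintype.card α else 0 := by
  have himage : {S ∈ (univ : Finset α).powerset | U ⊆ S} = (univ \ U).powerset.image (U ∪ ·) := by
    rw [← Icc_eq_image_powerset (subset_univ U)]
    ext
    simp
  have hdisj : ∀ C ∈ (univ \ U).powerset, Disjoint U C := fun C hC =>
    disjoint_of_subset_right (mem_powerset.1 hC) disjoint_sdiff
  rw [himage, sum_image fun C hC D hD h => ?_]
  · rw [sum_congr rfl fun C hC => by rw [card_union_of_disjoint (hdisj C hC), pow_add],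
      ← mul_sum, sum_powerset_neg_one_pow_card]
    simp only [sdiff_eq_empty_iff_subset, univ_subset_iff]
    split_ifs with h
    · rw [h, card_univ, mul_one]
    · rw [mul_zero]
  · rw [← union_sdiff_cancel_left (hdisj C hC), h, union_sdiff_cancel_left (hdisj D hD)]

section

variable {V : Type*} {G : SimpleGraph V} {w w' : List V} {a b : V}

lemma Sym2.out_mk_eq_or (a b : V) : s(a, b).out = (a, b) ∨ s(a, b).out = (b, a) := by
  have h : s(s(a, b).out.1, s(a, b).out.2) = s(a, b) := s(a, b).out_eq
  simpa using h

lemma SimpleGraph.adj_out_of_mem_edgeSet {e : Sym2 V} (he : e ∈ G.edgeSet) :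
    G.Adj e.out.1 e.out.2 := by
  rwa [← SimpleGraph.mem_edgeSet, show s(e.out.1, e.out.2) = e from e.out_eq]

namespace SimpleGraph

variable {α : Type*} [AddCommGroup α] {ω : V → V → α}

lemma IsAcyclic.sum_darts_of_adj (hG : G.IsAcyclic) (hω : ∀ a b, G.Adj a b → ω b a = -ω a b)
    {r : V} {p : G.Walk r a} {q : G.Walk r b} (hp : p.IsPath) (hq : q.IsPath)
    (hab : G.Adj a b) :
    (q.darts.map fun d => ω d.fst d.snd).sum = (p.darts.map fun d => ω d.fst d.snd).sum + ω a b := by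
  by_cases hb : b ∈ p.support
  · rw [hG.path_concat hq hp hab.symm hb, Walk.darts_concat]
    simp [hω a b hab]
  · have ha := hG.mem_support_of_ne_mem_support_of_adj_of_isPath hq hp hab.symm hb
    rw [hG.path_concat hp hq hab ha, Walk.darts_concat]
    simp

theorem IsAcyclic.exists_potential (hG : G.IsAcyclic) (hω : ∀ a b, G.Adj a b → ω b a = -ω a b) :
    ∃ φ : V → α, ∀ a b, G.Adj a b → φ b = φ a + ω a b := by
  choose r hr using fun C : G.ConnectedComponent => Quot.exists_rep C
  choose P hP using fun v =>
    (ConnectedComponent.exact (hr (G.connectedComponentMk v))).exists_isPath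
  refine ⟨fun v => ((P v).darts.map fun d => ω d.fst d.snd).sum, fun a b hab => ?_⟩
  have hC : r (G.connectedComponentMk b) = r (G.connectedComponentMk a) :=
    congrArg r (ConnectedComponent.sound hab.reachable).symm
  simpa using hG.sum_darts_of_adj hω (hP a) (((P b).isPath_copy hC rfl).2 (hP b)) hab

end SimpleGraph

lemma CommStep.perm (h : CommStep G w w') : w ~ w' := by
  obtain ⟨x, y, u, v, -, rfl, rfl⟩ := h
  exact (List.Perm.swap y x v).append_left u

lemma Relation.EqvGen.commStep_perm (h : Relation.EqvGen (CommStep G) w w') : w ~ w' := by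
  induction h with
  | rel _ _ h => exact h.perm
  | refl _ => exact .refl _
  | symm _ _ _ ih => exact ih.symm
  | trans _ _ _ _ _ ih₁ ih₂ => exact ih₁.trans ih₂

lemma Relation.EqvGen.commStep_cons (x : V) (h : Relation.EqvGen (CommStep G) w w') :
    Relation.EqvGen (CommStep G) (x :: w) (x :: w') := by
  induction h with
  | rel _ _ h =>
    obtain ⟨p, q, u, v, hpq, rfl, rfl⟩ := h
    exact .rel _ _ ⟨p, q, x :: u, v, hpq, rfl, rfl⟩
  | refl _ => exact .refl _
  | symm _ _ _ ih => exact ih.symm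
  | trans _ _ _ _ _ ih₁ ih₂ => exact .trans _ _ _ ih₁ ih₂

lemma eqvGen_commStep_append_cons (s t : List V) (hs : ∀ z ∈ s, ¬ G.Adj z a) :
    Relation.EqvGen (CommStep G) (s ++ a :: t) (a :: (s ++ t)) := by
  induction s with
  | nil => exact .refl _
  | cons z s ih =>
    refine .trans _ _ _ ((ih fun y hy => hs y (mem_cons_of_mem z hy)).commStep_cons z) ?_
    exact .rel _ _ ⟨z, a, [], s ++ t, hs z mem_cons_self, rfl, rfl⟩

variable [DecidableEq V]

lemma List.idxOf_lt_idxOf_of_pairwise {β : Type*} [LinearOrder β] {f : V → β}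
    {l : List V} (hl : l.Pairwise fun a b => f a ≤ f b) (ha : a ∈ l) (hb : b ∈ l)
    (h : f a < f b) : l.idxOf a < l.idxOf b := by
  by_contra! hle
  rcases hle.eq_or_lt with heq | hlt
  · exact h.ne (congrArg f ((idxOf_inj hb).1 heq).symm)
  · have := List.pairwise_iff_getElem.1 hl _ _ (idxOf_lt_length_iff.2 hb)
      (idxOf_lt_length_iff.2 ha) hlt
    rw [getElem_idxOf, getElem_idxOf] at this
    exact not_le.2 h this

lemma idxOf_lt_iff_of_swap {u v : List V} {x y : V} (hnd : (u ++ x :: y :: v).Nodup)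
    (hab : s(a, b) ≠ s(x, y)) :
    (u ++ x :: y :: v).idxOf a < (u ++ x :: y :: v).idxOf b ↔
      (u ++ y :: x :: v).idxOf a < (u ++ y :: x :: v).idxOf b := by
  simp only [List.nodup_append, List.nodup_cons, List.mem_cons] at hnd
  simp only [Ne, Sym2.eq_iff, not_or, not_and] at hab
  simp only [List.idxOf_append, List.idxOf_cons]
  grind

lemma CommStep.idxOf_lt_iff (h : CommStep G w w') (hw : w.Nodup) (hab : G.Adj a b) :
    w.idxOf a < w.idxOf b ↔ w'.idxOf a < w'.idxOf b := by
  obtain ⟨x, y, u, v, hxy, rfl, rfl⟩ := h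
  refine idxOf_lt_iff_of_swap hw fun h => hxy ?_
  rwa [← SimpleGraph.mem_edgeSet, ← h]

lemma Relation.EqvGen.commStep_idxOf_lt_iff (h : Relation.EqvGen (CommStep G) w w')
    (hw : w.Nodup) (hab : G.Adj a b) : w.idxOf a < w.idxOf b ↔ w'.idxOf a < w'.idxOf b := by
  induction h with
  | rel _ _ h => exact h.idxOf_lt_iff hw hab
  | refl _ => rfl
  | symm _ _ h ih => exact (ih (h.commStep_perm.nodup_iff.2 hw)).symm
  | trans _ _ _ h _ ih₁ ih₂ => exact (ih₁ hw).trans (ih₂ (h.commStep_perm.nodup_iff.1 hw))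

lemma eqvGen_commStep_of_perm (hw : w.Nodup) (hp : w ~ w')
    (hord : ∀ a b, G.Adj a b → w.idxOf a < w.idxOf b → w'.idxOf a < w'.idxOf b) :
    Relation.EqvGen (CommStep G) w w' := by
  induction w generalizing w' with
  | nil => rw [List.nil_perm.1 hp]; exact .refl _
  | cons a t ih =>
    obtain ⟨s, t', rfl⟩ := List.append_of_mem (hp.subset mem_cons_self)
    have hnd' := hp.nodup_iff.1 hw
    have hat : a ∉ t := (List.nodup_cons.1 hw).1
    have hp' : t ~ s ++ t' := (hp.trans List.perm_middle).cons_inv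
    have hast : a ∉ s ++ t' := fun h => hat (hp'.symm.subset h)
    have hbubble := eqvGen_commStep_append_cons (G := G) s t' fun z hz hza => by
      have has : a ∉ s := fun h => hast (mem_append_left t' h)
      have := hord a z hza.symm (by simp [(ne_of_mem_of_not_mem hz has).symm])
      rw [idxOf_append_of_notMem has, idxOf_cons_self, idxOf_append_of_mem hz] at this
      exact absurd (idxOf_lt_length_iff.2 hz) (by omega)
    have htail : Relation.EqvGen (CommStep G) t (s ++ t') := by
      refine ih (List.nodup_cons.1 hw).2 hp' fun c d hcd hlt => ?_
      by_cases hda : d = a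
      · subst hda
        rw [idxOf_eq_length hat, idxOf_lt_length_iff] at hlt
        rw [idxOf_eq_length hast, idxOf_lt_length_iff]
        exact hp'.subset hlt
      · have hca : c ≠ a := by
          rintro rfl
          rw [idxOf_eq_length hat] at hlt
          exact not_lt.2 idxOf_le_length hlt
        have := (hbubble.commStep_idxOf_lt_iff hnd' hcd).1
          (hord c d hcd (by simpa [idxOf_cons, Ne.symm hca, Ne.symm hda]))
        simpa [idxOf_cons, Ne.symm hca, Ne.symm hda] using this
    exact .trans _ _ _ (htail.commStep_cons a) (.symm _ _ hbubble)

variable [Fintype V] [DecidableRel G.Adj]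

variable (G) in
/-- An orientation of the edges of `G` between letters of `w` is recorded by the set of edges `e`
that `w` runs through from `e.out.1` to `e.out.2`; so the orientations of the subgraph induced
on `S` are the subsets of `G.edgeFinset ∩ S.sym2`. -/
noncomputable def forwardEdges (w : List V) : Finset (Sym2 V) :=
  {e ∈ G.edgeFinset ∩ w.toFinset.sym2 | w.idxOf e.out.1 < w.idxOf e.out.2}

lemma mem_forwardEdges_iff (hab : G.Adj a b) (ha : a ∈ w) (hb : b ∈ w) :
    s(a, b) ∈ forwardEdges G w ↔ (w.idxOf a < w.idxOf b ↔ s(a, b).out = (a, b)) := by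
  have hne : w.idxOf a ≠ w.idxOf b := fun h => hab.ne ((idxOf_inj ha).1 h)
  rcases Sym2.out_mk_eq_or a b with h | h <;>
    simp [forwardEdges, h, hab, ha, hb, hab.ne']
  omega

lemma Relation.EqvGen.commStep_forwardEdges_eq (h : Relation.EqvGen (CommStep G) w w')
    (hw : w.Nodup) : forwardEdges G w = forwardEdges G w' := by
  ext e
  simp only [forwardEdges, Finset.mem_filter, List.toFinset_eq_of_perm _ _ h.commStep_perm]
  refine and_congr_right fun he => h.commStep_idxOf_lt_iff hw ?_
  exact G.adj_out_of_mem_edgeSet (SimpleGraph.mem_edgeFinset.1 (mem_inter.1 he).1)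

lemma idxOf_lt_of_forwardEdges_eq (hS : w.toFinset = w'.toFinset)
    (hF : forwardEdges G w = forwardEdges G w') (hab : G.Adj a b)
    (hlt : w.idxOf a < w.idxOf b) : w'.idxOf a < w'.idxOf b := by
  have hmem : ∀ {c}, c ∈ w ↔ c ∈ w' := by simp [← List.mem_toFinset, hS]
  have ha : a ∈ w := idxOf_lt_length_iff.1 (hlt.trans_le idxOf_le_length)
  by_cases hb : b ∈ w
  · have := mem_forwardEdges_iff hab ha hb
    rw [hF, mem_forwardEdges_iff hab (hmem.1 ha) (hmem.1 hb)] at this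
    tauto
  · rw [idxOf_eq_length (mt hmem.2 hb)]
    exact idxOf_lt_length_iff.2 (hmem.1 ha)

theorem eqvGen_commStep_iff (hw : w.Nodup) (hw' : w'.Nodup) :
    Relation.EqvGen (CommStep G) w w' ↔
      w.toFinset = w'.toFinset ∧ forwardEdges G w = forwardEdges G w' :=
  ⟨fun h => ⟨List.toFinset_eq_of_perm _ _ h.commStep_perm, h.commStep_forwardEdges_eq hw⟩,
    fun ⟨hS, hF⟩ => eqvGen_commStep_of_perm hw (perm_of_nodup_nodup_toFinset_eq hw hw' hS)
      fun _ _ hab => idxOf_lt_of_forwardEdges_eq hS hF hab⟩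

theorem SimpleGraph.IsAcyclic.exists_forwardEdges_eq (hG : G.IsAcyclic) {S : Finset V}
    {B : Finset (Sym2 V)} (hB : B ⊆ G.edgeFinset ∩ S.sym2) :
    ∃ w : List V, w.Nodup ∧ w.toFinset = S ∧ forwardEdges G w = B := by
  -- `ω a b = 1` iff `B` asks for the edge `s(a, b)` to be run through from `a` to `b`.
  let ω : V → V → ℤ := fun a b => if (s(a, b) ∈ B ↔ s(a, b).out = (a, b)) then 1 else -1
  obtain ⟨φ, hφ⟩ := hG.exists_potential (ω := ω) fun a b hab => by
    rcases Sym2.out_mk_eq_or a b with h | h <;> by_cases hB : s(a, b) ∈ B <;>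
      simp [ω, Sym2.eq_swap (a := b), h, hB, hab.ne, hab.ne']
  let w := S.toList.mergeSort fun a b => φ a ≤ φ b
  have hperm : w ~ S.toList := mergeSort_perm _ _
  have hsorted : w.Pairwise fun a b => φ a ≤ φ b := by
    simpa using pairwise_mergeSort (le := fun a b => φ a ≤ φ b)
      (fun _ _ _ => by simpa using le_trans) (fun _ _ => by simpa using le_total _ _) S.toList
  have hS : w.toFinset = S := by rw [toFinset_eq_of_perm _ _ hperm, toList_toFinset]
  refine ⟨w, hperm.nodup_iff.2 S.nodup_toList, hS, ?_⟩
  ext e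
  by_cases he : e ∈ G.edgeFinset ∩ S.sym2
  · have hpq : G.Adj e.out.1 e.out.2 :=
      G.adj_out_of_mem_edgeSet (SimpleGraph.mem_edgeFinset.1 (mem_inter.1 he).1)
    have hmem : ∀ v ∈ e, v ∈ w := by simpa [← hS] using (mem_inter.1 he).2
    have hp := hmem _ e.out_fst_mem
    have hq := hmem _ e.out_snd_mem
    have hφpq := hφ _ _ hpq
    simp only [ω, show s(e.out.1, e.out.2) = e from e.out_eq, iff_true] at hφpq
    simp only [forwardEdges, Finset.mem_filter, hS, he, true_and]
    by_cases heB : e ∈ B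
    · simp only [heB, if_true] at hφpq
      exact iff_of_true (idxOf_lt_idxOf_of_pairwise hsorted hp hq (by omega)) heB
    · simp only [heB, if_false] at hφpq
      exact iff_of_false (not_lt.2 (idxOf_lt_idxOf_of_pairwise hsorted hq hp (by omega)).le) heB
  · have hF : e ∉ forwardEdges G w := fun h => he (by simpa [hS] using (Finset.mem_filter.1 h).1)
    exact iff_of_false hF fun h => he (hB h)

theorem SimpleGraph.IsAcyclic.bWords_eq (hG : G.IsAcyclic) (k : ℕ) :
    bWords G k = ∑ S ∈ powersetCard k univ, 2 ^ #(G.edgeFinset ∩ S.sym2) := by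
  let P := (powersetCard k (univ : Finset V)).sigma fun S => (G.edgeFinset ∩ S.sym2).powerset
  let W := {w : List V // w.Nodup ∧ w.length = k}
  have hmemP (w : W) : ⟨w.1.toFinset, forwardEdges G w.1⟩ ∈ P := by
    simp only [P, Finset.mem_sigma, mem_powersetCard_univ, mem_powerset]
    exact ⟨by rw [toFinset_card_of_nodup w.2.1, w.2.2], filter_subset _ _⟩
  let F : Quotient ((commSetoid G).comap (·.1 : W → List V)) → P :=
    Quotient.lift (fun w => ⟨_, hmemP w⟩) fun w w' h => by
      obtain ⟨hS, hF⟩ := (eqvGen_commStep_iff w.2.1 w'.2.1).1 h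
      simp [hS, hF]
  have hF : Function.Bijective F := by
    constructor
    · refine fun c c' => Quotient.inductionOn₂ c c' fun w w' h => Quotient.sound ?_
      simp only [F, Quotient.lift_mk, Subtype.mk.injEq, Sigma.mk.injEq, heq_eq_eq] at h
      exact (eqvGen_commStep_iff w.2.1 w'.2.1).2 h
    · rintro ⟨⟨S, B⟩, hSB⟩
      simp only [P, Finset.mem_sigma, mem_powersetCard_univ, mem_powerset] at hSB
      obtain ⟨w, hw, hwS, hwB⟩ := hG.exists_forwardEdges_eq hSB.2
      refine ⟨Quotient.mk _ ⟨w, hw, by rw [← toFinset_card_of_nodup hw, hwS, hSB.1]⟩, ?_⟩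
      simp [F, hwS, hwB]
  rw [bWords, Nat.card_eq_of_bijective F hF, Nat.card_eq_finsetCard, card_sigma]
  simp_rw [card_powerset]

variable (G) in
theorem sum_neg_one_pow_mul_two_pow_card_edgeFinset_inter_sym2 :
    ∑ S ∈ (univ : Finset V).powerset, (-1 : ℤ) ^ #S * 2 ^ #(G.edgeFinset ∩ S.sym2) =
      (-1) ^ Fintype.card V * #{B ∈ G.edgeFinset.powerset | ∀ v : V, ∃ e ∈ B, v ∈ e} := by
  let U : Finset (Sym2 V) → Finset V := fun B => {v | ∃ e ∈ B, v ∈ e}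
  calc ∑ S ∈ (univ : Finset V).powerset, (-1 : ℤ) ^ #S * 2 ^ #(G.edgeFinset ∩ S.sym2)
      = ∑ S ∈ (univ : Finset V).powerset, ∑ _B ∈ (G.edgeFinset ∩ S.sym2).powerset, (-1 : ℤ) ^ #S := by
        refine sum_congr rfl fun S _ => ?_
        rw [sum_const, card_powerset, nsmul_eq_mul, mul_comm]
        push_cast
        rfl
    _ = ∑ B ∈ G.edgeFinset.powerset, ∑ S ∈ (univ : Finset V).powerset with U B ⊆ S, (-1) ^ #S :=
        sum_comm' fun S B => by
          simp only [mem_powerset, Finset.mem_filter, true_and, U, Finset.subset_iff,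
            mem_inter, Finset.mem_sym2_iff, Finset.mem_filter, mem_univ, forall_exists_index, and_imp]
          grind
    _ = ∑ B ∈ G.edgeFinset.powerset, if U B = univ then (-1) ^ Fintype.card V else 0 := by
        simp_rw [sum_superset_neg_one_pow_card]
    _ = _ := by
        rw [sum_ite, sum_const_zero, add_zero, sum_const, nsmul_eq_mul, mul_comm]
        simp [U, Finset.eq_univ_iff_forall]

theorem SimpleGraph.IsAcyclic.booleanNumber_eq (hG : G.IsAcyclic) :
    booleanNumber G = (-1) ^ Fintype.card V *
      ∑ S ∈ (univ : Finset V).powerset, (-1 : ℤ) ^ #S * 2 ^ #(G.edgeFinset ∩ S.sym2) := by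
  rw [booleanNumber, sum_powerset, card_univ]
  congr 1
  refine sum_congr rfl fun k _ => ?_
  rw [hG.bWords_eq, Nat.cast_sum, mul_sum]
  refine sum_congr rfl fun S hS => ?_
  rw [(mem_powersetCard.1 hS).2]
  push_cast
  rfl

theorem SimpleGraph.IsAcyclic.booleanNumber_eq_card_edgeCovers (hG : G.IsAcyclic) :
    booleanNumber G = #{B ∈ G.edgeFinset.powerset | ∀ v : V, ∃ e ∈ B, v ∈ e} := by
  rw [hG.booleanNumber_eq, sum_neg_one_pow_mul_two_pow_card_edgeFinset_inter_sym2, ← mul_assoc,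
    ← mul_pow, neg_one_mul, neg_neg, one_pow, one_mul]

end

theorem booleanNumber_tree_eq_card_spanning_forests_general {V : Type*} [Fintype V] [DecidableEq V]
    (T : SimpleGraph V) [DecidableRel T.Adj] (hT : T.IsTree) :
    booleanNumber T =
      ((T.edgeFinset.powerset.filter (fun B => ∀ v : V, ∃ e ∈ B, v ∈ e)).card : ℤ) :=
  hT.isAcyclic.booleanNumber_eq_card_edgeCovers

/-- **The boolean number of a tree counts spanning forests.**  For a nonempty finite tree
`T`, `β(T)` equals the number of subsets `B` of the edge set such that every vertex of `T`
is incident to some edge of `B` (equivalently, the number of spanning forests of `T`). -/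
theorem booleanNumber_tree_eq_card_spanning_forests {V : Type*} [Fintype V] [DecidableEq V]
    [Nonempty V] (T : SimpleGraph V) [DecidableRel T.Adj] (hT : T.IsTree) :
    booleanNumber T =
      ((T.edgeFinset.powerset.filter (fun B => ∀ v : V, ∃ e ∈ B, v ∈ e)).card : ℤ) :=
  booleanNumber_tree_eq_card_spanning_forests_general T hT
end
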